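/- arXiv:2507.10979 — 8 statements merged into one kernel-verified Lean document; each statement's English description precedes it below -/
import Mathlib

section
/- Let α be a type, X, X₀, Xₐ ⊆ X subsets of α with f : α → α mapping X into X, and let B : α → ℝ and σ, φ ∈ ℝ satisfy: σ < φ; B(x) ≤ σ for all x ∈ X₀; B(x) ≥ φ for all x ∈ Xₐ; and B(f(x)) − B(x) ≤ 0 for all x ∈ X. Then for every x₀ ∈ X₀ and every k ∈ ℕ, the k-th iterate f^[k](x₀) does not belong to Xₐ (i.e., every trajectory of the discrete-time system x(k+1) = f(x(k)) starting in X₀ avoids Xₐ for all time). -/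
/-- **Barrier certificates ensure safety of a discrete-time system.**
If `B` is a barrier certificate for the system `x(k+1) = f(x(k))` with state set `X`,
initial set `X₀` and unsafe set `Xₐ`, then every trajectory starting in `X₀`
avoids `Xₐ` for all time. -/
theorem barrier_certificate_safety {α : Type*} (X X₀ Xₐ : Set α) (f : α → α)
    (B : α → ℝ) (σ φ : ℝ)
    (hX₀ : X₀ ⊆ X) (hXₐ : Xₐ ⊆ X)
    (hf : ∀ x ∈ X, f x ∈ X)
    (hσφ : σ < φ)
    (hinit : ∀ x ∈ X₀, B x ≤ σ)
    (hunsafe : ∀ x ∈ Xₐ, φ ≤ B x)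
    (hdec : ∀ x ∈ X, B (f x) - B x ≤ 0) :
    ∀ x₀ ∈ X₀, ∀ k : ℕ, f^[k] x₀ ∉ Xₐ := by
  intro x₀ hx₀ k
  have key : ∀ k : ℕ, f^[k] x₀ ∈ X ∧ B (f^[k] x₀) ≤ σ := by
    intro k
    induction k with
    | zero => exact ⟨hX₀ hx₀, hinit x₀ hx₀⟩
    | succ n ih =>
      rw [Function.iterate_succ_apply']
      exact ⟨hf _ ih.1, by linarith [hdec _ ih.1, ih.2]⟩
  intro hmem
  linarith [(key k).2, hunsafe _ hmem]
end

section
/- For each i ∈ ℕ let E_i = ℝ^{n_i} (Euclidean space), X_{0_i} ⊆ E_i, let B_i : E_i → ℝ be Lipschitz on X_{0_i} with constant L_i ≥ 0, let σ_i, η_i, θ_i ∈ ℝ, and suppose there are finitely many samples x_i^1, …, x_i^{N_i} ∈ X_{0_i} such that B_i(x_i^z) − σ_i ≤ η_i for every z, and every point of X_{0_i} lies within distance θ_i ≥ 0 of some sample x_i^z. Assume the sequences (σ_i) and (η_i + L_i θ_i) are summable with ∑_{i} (η_i + L_i θ_i) ≤ 0. Then for every family x = (x_i) with x_i ∈ X_{0_i}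 for all i such that (B_i(x_i))_i is summable, one has ∑_{i} B_i(x_i) ≤ ∑_{i} σ_i. -/
/-- **Compositional data-driven initial-set condition.**
Per-subsystem storage certificates `B i`, Lipschitz on the initial sets `X₀ i`,
verified on finitely many samples that `θ i`-cover `X₀ i`, yield the network
initial-set condition `∑' i, B i (x i) ≤ ∑' i, σ i`, provided
`∑' i, (η i + L i * θ i) ≤ 0`. -/
theorem compositional_initial_condition (n : ℕ → ℕ)
    (X₀ : ∀ i : ℕ, Set (EuclideanSpace ℝ (Fin (n i))))
    (B : ∀ i : ℕ, EuclideanSpace ℝ (Fin (n i)) → ℝ)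
    (L σ η θ : ℕ → ℝ)
    (hL : ∀ i, 0 ≤ L i) (hθ : ∀ i, 0 ≤ θ i)
    (hLip : ∀ i, ∀ x ∈ X₀ i, ∀ y ∈ X₀ i, |B i x - B i y| ≤ L i * dist x y)
    (N : ℕ → ℕ) (xs : ∀ i : ℕ, Fin (N i) → EuclideanSpace ℝ (Fin (n i)))
    (hxs : ∀ i z, xs i z ∈ X₀ i)
    (hsamp : ∀ i z, B i (xs i z) - σ i ≤ η i)
    (hcover : ∀ i, ∀ x ∈ X₀ i, ∃ z, dist x (xs i z) ≤ θ i)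
    (hσ : Summable σ)
    (hsum : Summable (fun i => η i + L i * θ i))
    (hsum0 : ∑' i, (η i + L i * θ i) ≤ 0) :
    ∀ x : (i : ℕ) → EuclideanSpace ℝ (Fin (n i)),
      (∀ i, x i ∈ X₀ i) → Summable (fun i => B i (x i)) →
      ∑' i, B i (x i) ≤ ∑' i, σ i := by
  intro x hx hBsum
  have key : ∀ i, B i (x i) ≤ σ i + (η i + L i * θ i) := by
    intro i
    obtain ⟨z, hz⟩ := hcover i (x i) (hx i)
    have h1 := hLip i (x i) (hx i) (xs i z) (hxs i z)
    have h2 := hsamp i z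
    have h3 : L i * dist (x i) (xs i z) ≤ L i * θ i :=
      mul_le_mul_of_nonneg_left hz (hL i)
    have := abs_le.mp h1
    linarith [this.2]
  have hση : Summable (fun i => σ i + (η i + L i * θ i)) := hσ.add hsum
  calc ∑' i, B i (x i) ≤ ∑' i, (σ i + (η i + L i * θ i)) :=
        Summable.tsum_le_tsum key hBsum hση
    _ = ∑' i, σ i + ∑' i, (η i + L i * θ i) := Summable.tsum_add hσ hsum
    _ ≤ ∑' i, σ i := by linarith
end

section
/- For each i ∈ ℕ let E_i = ℝ^{n_i} (Euclidean space), X_{a_i} ⊆ E_i, let B_i : E_i → ℝ be Lipschitz on X_{a_i} with constant L_i ≥ 0, let φ_i, η_i, θ_i ∈ ℝ, and suppose there are finitely many samples x_i^1, …, x_i^{N_i} ∈ X_{a_i} such that −B_i(x_i^z) + φ_i ≤ η_i for every z, and every point of X_{a_i} lies within distance θ_i ≥ 0 of some sample x_i^z. Assume the sequences (φ_i) and (η_i + L_i θ_i) are summable with ∑_{i} (η_i + L_i θ_i) ≤ 0. Then for every family x = (x_i) with x_i ∈ X_{a_i} for all i such that (B_i(x_i))_i is summable, one has ∑_{i} B_i(x_i)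 ≥ ∑_{i} φ_i. -/
/-- **Compositional data-driven unsafe-set condition.**
Per-subsystem storage certificates `B i`, Lipschitz on the unsafe sets `Xₐ i`,
verified on finitely many samples that `θ i`-cover `Xₐ i`, yield the network
unsafe-set condition `∑' i, B i (x i) ≥ ∑' i, φ i`, provided
`∑' i, (η i + L i * θ i) ≤ 0`. -/
theorem compositional_unsafe_condition (n : ℕ → ℕ)
    (Xₐ : ∀ i : ℕ, Set (EuclideanSpace ℝ (Fin (n i))))
    (B : ∀ i : ℕ, EuclideanSpace ℝ (Fin (n i)) → ℝ)
    (L φ η θ : ℕ → ℝ)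
    (hL : ∀ i, 0 ≤ L i) (hθ : ∀ i, 0 ≤ θ i)
    (hLip : ∀ i, ∀ x ∈ Xₐ i, ∀ y ∈ Xₐ i, |B i x - B i y| ≤ L i * dist x y)
    (N : ℕ → ℕ) (xs : ∀ i : ℕ, Fin (N i) → EuclideanSpace ℝ (Fin (n i)))
    (hxs : ∀ i z, xs i z ∈ Xₐ i)
    (hsamp : ∀ i z, -B i (xs i z) + φ i ≤ η i)
    (hcover : ∀ i, ∀ x ∈ Xₐ i, ∃ z, dist x (xs i z) ≤ θ i)
    (hφ : Summable φ)
    (hsum : Summable (fun i => η i + L i * θ i))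
    (hsum0 : ∑' i, (η i + L i * θ i) ≤ 0) :
    ∀ x : (i : ℕ) → EuclideanSpace ℝ (Fin (n i)),
      (∀ i, x i ∈ Xₐ i) → Summable (fun i => B i (x i)) →
      ∑' i, φ i ≤ ∑' i, B i (x i) := by
  intro x hx hB
  have key : ∀ i, φ i ≤ B i (x i) + (η i + L i * θ i) := by
    intro i
    obtain ⟨z, hz⟩ := hcover i (x i) (hx i)
    have h1 : |B i (x i) - B i (xs i z)| ≤ L i * dist (x i) (xs i z) :=
      hLip i (x i) (hx i) (xs i z) (hxs i z)
    have h2 : L i * dist (x i) (xs i z) ≤ L i * θ i :=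
      mul_le_mul_of_nonneg_left hz (hL i)
    have h3 := hsamp i z
    have h4 : B i (xs i z) - B i (x i) ≤ L i * θ i :=
      le_trans (le_trans (le_abs_self _) ((abs_sub_comm _ _).trans_le h1)) h2
    linarith
  calc ∑' i, φ i ≤ ∑' i, (B i (x i) + (η i + L i * θ i)) :=
        Summable.tsum_le_tsum key hφ (hB.add hsum)
    _ = (∑' i, B i (x i)) + ∑' i, (η i + L i * θ i) := Summable.tsum_add hB hsum
    _ ≤ ∑' i, B i (x i) := by linarith
end

section
/- For each i ∈ ℕ let E_i = ℝ^{n_i} and F_i = ℝ^{p_i} be Euclidean spaces, with state set X_i ⊆ E_i, internal-input set D_i ⊆ F_i, initial set X_{0_i} ⊆ X_i, unsafe set X_{a_i} ⊆ X_i, and transition map f_i : E_i × F_i → E_i satisfying f_i(x, d) ∈ X_i for all (x, d) ∈ X_i × D_i. Let M : (Π_i E_i) → (Π_i F_i) be an interconnection map such that M(x)_i ∈ D_i whenever x_i ∈ X_i for all i, and define the network map F by F(x)_i = f_i(x_i, M(x)_i). Suppose for each i there are B_i : E_i → ℝ, constants σ_i, φ_i, η_i, β_i ∈ ℝ, θ_i,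 L¹_i, L²_i ≥ 0 such that: (a) B_i is Lipschitz on X_i with constant L¹_i and (x, d) ↦ B_i(f_i(x, d)) − B_i(x) is Lipschitz on X_i × D_i with constant L²_i (product metric); (b) for every x ∈ X_{0_i} there is a sample x̂ ∈ X_{0_i} with dist(x, x̂) ≤ θ_i and B_i(x̂) − σ_i ≤ η_i; (c) for every x ∈ X_{a_i} there is a sample x̂ ∈ X_{a_i} with dist(x, x̂) ≤ θ_i and −B_i(x̂) + φ_i ≤ η_i; (d) for every (x, d) ∈ X_i × D_i there is a sample (x̂, d̂) ∈ X_i × D_i with dist((x, d), (x̂, d̂)) ≤ θ_i and B_i(f_i(x̂, d̂)) − B_i(x̂) ≤ η_i + β_i. Assume the compositional conditions: (σ_i) and (φ_i) are summable with ∑_i σ_i < ∑_i φ_i; (η_i + L¹_i θ_i) is summable with ∑_i (η_i + L¹_i θ_i) ≤ 0; (η_i + β_i + L²_i θ_i) is summable with ∑_i (η_i + β_i + L²_i θ_i) ≤ 0; and for every x with x_i ∈ X_i for all i, the sequence (B_i(x_i))_i is summable. Then the network is safe: for every x⁰ with x⁰_i ∈ X_{0_i} for all i and every k ∈ ℕ,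 it is not the case that (F^[k](x⁰))_i ∈ X_{a_i} for all i. -/
/-- **Main compositional data-driven safety theorem for infinite networks.**
An infinite network of discrete-time subsystems `x_i(k+1) = f_i(x_i(k), d_i(k))`,
interconnected via an (unknown) map `M` with `d_i = M(x)_i`, is safe over an
infinite time horizon provided the sampled scenario constraints per subsystem and
the compositional conditions on the series hold: no trajectory of the network map
`F(x)_i = f_i(x_i, M(x)_i)` starting in the network initial set ever enters the
network unsafe set. -/
theorem compositional_data_driven_safety (n p : ℕ → ℕ)
    (X X₀ Xₐ : ∀ i : ℕ, Set (EuclideanSpace ℝ (Fin (n i))))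
    (D : ∀ i : ℕ, Set (EuclideanSpace ℝ (Fin (p i))))
    (f : ∀ i : ℕ, EuclideanSpace ℝ (Fin (n i)) × EuclideanSpace ℝ (Fin (p i)) →
      EuclideanSpace ℝ (Fin (n i)))
    (hX₀ : ∀ i, X₀ i ⊆ X i) (hXₐ : ∀ i, Xₐ i ⊆ X i)
    (hfX : ∀ i, ∀ q ∈ X i ×ˢ D i, f i q ∈ X i)
    (M : (∀ i : ℕ, EuclideanSpace ℝ (Fin (n i))) → ∀ i : ℕ, EuclideanSpace ℝ (Fin (p i)))
    (hM : ∀ x, (∀ i, x i ∈ X i) → ∀ i, M x i ∈ D i)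
    (B : ∀ i : ℕ, EuclideanSpace ℝ (Fin (n i)) → ℝ)
    (σ φ η β θ L1 L2 : ℕ → ℝ)
    (hθ : ∀ i, 0 ≤ θ i) (hL1 : ∀ i, 0 ≤ L1 i) (hL2 : ∀ i, 0 ≤ L2 i)
    -- (a) Lipschitz continuity of `B i` and of `(x, d) ↦ B i (f i (x, d)) - B i x`
    (hLipB : ∀ i, ∀ x ∈ X i, ∀ y ∈ X i, |B i x - B i y| ≤ L1 i * dist x y)
    (hLipg : ∀ i, ∀ q ∈ X i ×ˢ D i, ∀ r ∈ X i ×ˢ D i,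
      |(B i (f i q) - B i q.1) - (B i (f i r) - B i r.1)| ≤ L2 i * dist q r)
    -- (b) sampled initial-set constraint
    (hsamp₀ : ∀ i, ∀ x ∈ X₀ i, ∃ x' ∈ X₀ i, dist x x' ≤ θ i ∧ B i x' - σ i ≤ η i)
    -- (c) sampled unsafe-set constraint
    (hsampₐ : ∀ i, ∀ x ∈ Xₐ i, ∃ x' ∈ Xₐ i, dist x x' ≤ θ i ∧ -B i x' + φ i ≤ η i)
    -- (d) sampled decrease constraint
    (hsampd : ∀ i, ∀ q ∈ X i ×ˢ D i, ∃ q' ∈ X i ×ˢ D i, dist q q' ≤ θ i ∧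
      B i (f i q') - B i q'.1 ≤ η i + β i)
    -- compositional conditions
    (hσ : Summable σ) (hφ : Summable φ) (hσφ : ∑' i, σ i < ∑' i, φ i)
    (h1 : Summable (fun i => η i + L1 i * θ i))
    (h1' : ∑' i, (η i + L1 i * θ i) ≤ 0)
    (h2 : Summable (fun i => η i + β i + L2 i * θ i))
    (h2' : ∑' i, (η i + β i + L2 i * θ i) ≤ 0)
    (hBsum : ∀ x : ∀ i : ℕ, EuclideanSpace ℝ (Fin (n i)),
      (∀ i, x i ∈ X i) → Summable (fun i => B i (x i))) :
    ∀ x₀ : ∀ i : ℕ, EuclideanSpace ℝ (Fin (n i)), (∀ i, x₀ i ∈ X₀ i) →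
      ∀ k : ℕ, ¬ (∀ i, (fun x i => f i (x i, M x i))^[k] x₀ i ∈ Xₐ i) := by
  intro x₀ hx₀ k hk
  set F : (∀ i : ℕ, EuclideanSpace ℝ (Fin (n i))) → ∀ i : ℕ, EuclideanSpace ℝ (Fin (n i)) :=
    fun x i => f i (x i, M x i) with hFdef
  have hXtraj : ∀ m, ∀ i, (F^[m] x₀) i ∈ X i := by
    intro m
    induction m with
    | zero => intro i; exact hX₀ i (hx₀ i)
    | succ m ih =>
      intro i
      rw [Function.iterate_succ_apply']
      exact hfX i _ ⟨ih i, hM _ ih i⟩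
  -- pointwise initial bound
  have hinit : ∀ i, B i (x₀ i) ≤ σ i + (η i + L1 i * θ i) := by
    intro i
    obtain ⟨x', hx', hd, hb⟩ := hsamp₀ i _ (hx₀ i)
    have h := hLipB i _ (hX₀ i (hx₀ i)) _ (hX₀ i hx')
    have h2 : B i (x₀ i) - B i x' ≤ L1 i * θ i :=
      le_trans (le_trans (le_abs_self _) h) (mul_le_mul_of_nonneg_left hd (hL1 i))
    linarith
  -- pointwise decrease bound
  have hdec : ∀ m i, B i ((F^[m+1] x₀) i) ≤ B i ((F^[m] x₀) i) + (η i + β i + L2 i * θ i) := by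
    intro m i
    set q : EuclideanSpace ℝ (Fin (n i)) × EuclideanSpace ℝ (Fin (p i)) :=
      ((F^[m] x₀) i, M (F^[m] x₀) i) with hqdef
    have hq : q ∈ X i ×ˢ D i := ⟨hXtraj m i, hM _ (hXtraj m) i⟩
    obtain ⟨q', hq', hd, hb⟩ := hsampd i _ hq
    have h := hLipg i _ hq _ hq'
    have h2 : (B i (f i q) - B i q.1) - (B i (f i q') - B i q'.1) ≤ L2 i * θ i :=
      le_trans (le_trans (le_abs_self _) h) (mul_le_mul_of_nonneg_left hd (hL2 i))
    have heq : (F^[m+1] x₀) i = f i q := by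
      rw [Function.iterate_succ_apply']
    rw [heq]
    have hq1 : q.1 = (F^[m] x₀) i := rfl
    rw [← hq1]
    linarith
  -- pointwise unsafe bound
  have hunsafe : ∀ i, φ i - (η i + L1 i * θ i) ≤ B i ((F^[k] x₀) i) := by
    intro i
    obtain ⟨x', hx', hd, hb⟩ := hsampₐ i _ (hk i)
    have h := hLipB i _ (hXₐ i hx') _ (hXₐ i (hk i))
    have h2 : B i x' - B i ((F^[k] x₀) i) ≤ L1 i * θ i := by
      refine le_trans (le_trans (le_abs_self _) h) ?_
      rw [dist_comm]
      exact mul_le_mul_of_nonneg_left hd (hL1 i)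
    linarith
  -- summability of trajectory barrier values
  have hSm : ∀ m, Summable (fun i => B i ((F^[m] x₀) i)) := fun m => hBsum _ (hXtraj m)
  -- the total barrier is nonincreasing along the trajectory
  have hmono : ∀ m, (∑' i, B i ((F^[m] x₀) i)) ≤ ∑' i, B i (x₀ i) := by
    intro m
    induction m with
    | zero => simp
    | succ m ih =>
      have hstep : (∑' i, B i ((F^[m+1] x₀) i)) ≤
          ∑' i, (B i ((F^[m] x₀) i) + (η i + β i + L2 i * θ i)) :=
        Summable.tsum_le_tsum (hdec m) (hSm (m+1)) ((hSm m).add h2)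
      rw [Summable.tsum_add (hSm m) h2] at hstep
      linarith
  have hupper : (∑' i, B i (x₀ i)) ≤ ∑' i, σ i := by
    have h := Summable.tsum_le_tsum hinit (hSm 0) (hσ.add h1)
    rw [Summable.tsum_add hσ h1] at h
    linarith
  have hlower : (∑' i, φ i) ≤ ∑' i, B i ((F^[k] x₀) i) := by
    have h := Summable.tsum_le_tsum hunsafe (hφ.sub h1) (hSm k)
    rw [Summable.tsum_sub hφ h1] at h
    linarith
  have := hmono k
  linarith
end

section
/- Let n, p ∈ ℕ and m = p + n, let X ⊆ ℝⁿ, D ⊆ ℝᵖ, B : ℝⁿ → ℝ, f : ℝⁿ × ℝᵖ → ℝⁿ, let S be a symmetric m × m real matrix, and define the supply rate q(x, d) = v(x, d)ᵀ S v(x, d) where v(x, d) = (d; x) is the concatenated vector. Suppose the function g(x, d) = B(f(x, d)) − B(x) is Lipschitz on X × D with constant L ≥ 0 (product metric), and there are finitely many samples (x^z, d^z) ∈ X × D, z = 1, …, N, such that every point of X × D lies within distance θ ≥ 0 of some sample, and at every sample both B(f(x^z, d^z)) − B(x^z) − q(x^z, d^z) ≤ η and q(x^z, d^z) ≤ β hold.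 Then for every (x, d) ∈ X × D, B(f(x, d)) − B(x) ≤ η + β + L·θ. -/
theorem le_add_mul_of_forall_dist_le_of_sample_le {α ι : Type*} [PseudoMetricSpace α]
    {s : Set α} {g : α → ℝ} {L θ c : ℝ} (hL : 0 ≤ L)
    (hLip : ∀ x ∈ s, ∀ y ∈ s, |g x - g y| ≤ L * dist x y)
    {samp : ι → α} (hmem : ∀ i, samp i ∈ s) (hcover : ∀ x ∈ s, ∃ i, dist x (samp i) ≤ θ)
    (hsamp : ∀ i, g (samp i) ≤ c) :
    ∀ x ∈ s, g x ≤ c + L * θ := by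
  intro x hx
  obtain ⟨i, hi⟩ := hcover x hx
  calc g x ≤ g (samp i) + L * dist x (samp i) := by
        linarith [(abs_le.mp (hLip x hx (samp i) (hmem i))).2]
    _ ≤ c + L * θ := add_le_add (hsamp i) (mul_le_mul_of_nonneg_left hi hL)

theorem scenario_decrease_extension_general (n p : ℕ)
    (X : Set (Fin n → ℝ)) (D : Set (Fin p → ℝ))
    (B : (Fin n → ℝ) → ℝ)
    (f : (Fin n → ℝ) × (Fin p → ℝ) → Fin n → ℝ)
    (S : Matrix (Fin (p + n)) (Fin (p + n)) ℝ)
    (L θ η β : ℝ) (hL : 0 ≤ L)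
    (hLip : ∀ q ∈ X ×ˢ D, ∀ r ∈ X ×ˢ D,
      |(B (f q) - B q.1) - (B (f r) - B r.1)| ≤ L * dist q r)
    (N : ℕ) (samp : Fin N → (Fin n → ℝ) × (Fin p → ℝ))
    (hmem : ∀ z, samp z ∈ X ×ˢ D)
    (hcover : ∀ q ∈ X ×ˢ D, ∃ z, dist q (samp z) ≤ θ)
    (hdis : ∀ z, B (f (samp z)) - B (samp z).1 -
      dotProduct (Fin.append (samp z).2 (samp z).1)
        (S.mulVec (Fin.append (samp z).2 (samp z).1)) ≤ η)
    (hsup : ∀ z, dotProduct (Fin.append (samp z).2 (samp z).1)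
        (S.mulVec (Fin.append (samp z).2 (samp z).1)) ≤ β) :
    ∀ q ∈ X ×ˢ D, B (f q) - B q.1 ≤ η + β + L * θ := by
  have hsample : ∀ z, B (f (samp z)) - B (samp z).1 ≤ η + β := fun z => by
    linarith [hdis z, hsup z]
  exact le_add_mul_of_forall_dist_le_of_sample_le hL hLip hmem hcover hsample

/-- **Data-driven extension of the scenario decrease estimate.**
With supply rate `q(x,d) = v(x,d)ᵀ S v(x,d)`, `v(x,d) = (d; x)`, if
`g(x,d) = B(f(x,d)) - B(x)` is Lipschitz on `X ×ˢ D` with constant `L`, the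
finitely many samples `θ`-cover `X ×ˢ D`, and at every sample both
`B(f(x^z,d^z)) - B(x^z) - q(x^z,d^z) ≤ η` and `q(x^z,d^z) ≤ β` hold, then
`B(f(x,d)) - B(x) ≤ η + β + L * θ` on all of `X ×ˢ D`. -/
theorem scenario_decrease_extension (n p : ℕ)
    (X : Set (Fin n → ℝ)) (D : Set (Fin p → ℝ))
    (B : (Fin n → ℝ) → ℝ)
    (f : (Fin n → ℝ) × (Fin p → ℝ) → Fin n → ℝ)
    (S : Matrix (Fin (p + n)) (Fin (p + n)) ℝ) (hS : S.IsSymm)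
    (L θ η β : ℝ) (hL : 0 ≤ L) (hθ : 0 ≤ θ)
    (hLip : ∀ q ∈ X ×ˢ D, ∀ r ∈ X ×ˢ D,
      |(B (f q) - B q.1) - (B (f r) - B r.1)| ≤ L * dist q r)
    (N : ℕ) (samp : Fin N → (Fin n → ℝ) × (Fin p → ℝ))
    (hmem : ∀ z, samp z ∈ X ×ˢ D)
    (hcover : ∀ q ∈ X ×ˢ D, ∃ z, dist q (samp z) ≤ θ)
    (hdis : ∀ z, B (f (samp z)) - B (samp z).1 -
      dotProduct (Fin.append (samp z).2 (samp z).1)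
        (S.mulVec (Fin.append (samp z).2 (samp z).1)) ≤ η)
    (hsup : ∀ z, dotProduct (Fin.append (samp z).2 (samp z).1)
        (S.mulVec (Fin.append (samp z).2 (samp z).1)) ≤ β) :
    ∀ q ∈ X ×ˢ D, B (f q) - B q.1 ≤ η + β + L * θ :=
  scenario_decrease_extension_general n p X D B f S L θ η β hL hLip N samp hmem hcover hdis hsup
end

section
/- Let x : ℕ → ℝ → ℝ be a family of differentiable functions satisfying, for every t ∈ ℝ: x₁ has derivative −x₁(t) + 1 at t, and for every k ≥ 1, x_{k+1} has derivative −x_{k+1}(t) + 2·x_k(t) at t; and x_k(0) = 1 for every k ≥ 1. Then for every k ≥ 2 and every t ≥ 0, the derivative of x_k at t is strictly positive, i.e., −x_k(t) + 2·x_{k−1}(t) > 0. -/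
/-!
The velocities `v₀ = 1 - x₁` and `v_k = -x_{k+1} + 2 x_k` (`k ≥ 1`) form a cascade of the same
shape, `v̇₀ = -v₀` and `v̇_{k+1} = -v_{k+1} + 2 v_k`, with `v₀(0) = 0` and `v_k(0) = 1` for `k ≥ 1`.
For a scalar equation `ḟ = -f + g` the product `eᵗ f(t)` has derivative `eᵗ g(t)`, so it is
nondecreasing on `t ≥ 0` as soon as `g ≥ 0` there. By induction along the cascade every `v_k` is
therefore nonnegative for `t ≥ 0`, and `eᵗ v_k(t) ≥ v_k(0) = 1` for `k ≥ 1`.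
-/

open Real Set

theorem le_exp_mul_of_hasDerivAt_neg_add {f g : ℝ → ℝ}
    (hf : ∀ t, HasDerivAt f (-f t + g t) t) (hg : ∀ t, 0 ≤ t → 0 ≤ g t)
    {t : ℝ} (ht : 0 ≤ t) : f 0 ≤ exp t * f t := by
  have hderiv : ∀ s, HasDerivAt (fun s => exp s * f s) (exp s * g s) s := fun s =>
    ((hasDerivAt_exp s).mul (hf s)).congr_deriv (by ring)
  have hmono : MonotoneOn (fun s => exp s * f s) (Ici 0) :=
    monotoneOn_of_hasDerivWithinAt_nonneg (convex_Ici 0)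
      (fun s _ => (hderiv s).continuousAt.continuousWithinAt)
      (fun s _ => (hderiv s).hasDerivWithinAt)
      (fun s hs => mul_nonneg (exp_pos s).le (hg s (interior_subset hs)))
  simpa using hmono self_mem_Ici ht ht

/-- `cascadeVelocity x k` is the right-hand side of the equation for `x (k + 1)`. -/
noncomputable def cascadeVelocity (x : ℕ → ℝ → ℝ) : ℕ → ℝ → ℝ
  | 0, t => -x 1 t + 1
  | k + 1, t => -x (k + 2) t + 2 * x (k + 1) t

section Cascade

variable {x : ℕ → ℝ → ℝ}
  (h1 : ∀ t : ℝ, HasDerivAt (x 1) (-(x 1 t) + 1) t)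
  (hk : ∀ k : ℕ, 1 ≤ k → ∀ t : ℝ, HasDerivAt (x (k + 1)) (-(x (k + 1) t) + 2 * x k t) t)

include h1 hk in
theorem hasDerivAt_cascadeVelocity_succ (k : ℕ) (t : ℝ) :
    HasDerivAt (cascadeVelocity x (k + 1))
      (-cascadeVelocity x (k + 1) t + 2 * cascadeVelocity x k t) t := by
  have hx₂ := hk (k + 1) (by omega) t
  cases k with
  | zero =>
    exact (hx₂.neg.add ((h1 t).const_mul 2)).congr_deriv (by simp [cascadeVelocity])
  | succ k =>
    exact (hx₂.neg.add ((hk (k + 1) (by omega) t).const_mul 2)).congr_deriv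
      (by simp [cascadeVelocity])

theorem cascadeVelocity_succ_zero (h0 : ∀ k : ℕ, 1 ≤ k → x k 0 = 1) (k : ℕ) :
    cascadeVelocity x (k + 1) 0 = 1 := by
  simp only [cascadeVelocity, h0 (k + 2) (by omega), h0 (k + 1) (by omega)]
  norm_num

include h1 hk in
theorem cascadeVelocity_nonneg (h0 : ∀ k : ℕ, 1 ≤ k → x k 0 = 1) (k : ℕ) {t : ℝ} (ht : 0 ≤ t) :
    0 ≤ cascadeVelocity x k t := by
  induction k generalizing t with
  | zero =>
    have hv : ∀ s, HasDerivAt (cascadeVelocity x 0) (-cascadeVelocity x 0 s + 0) s := fun s =>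
      ((h1 s).neg.add_const 1).congr_deriv (by simp [cascadeVelocity])
    have hv₀ : cascadeVelocity x 0 0 = 0 := by simp [cascadeVelocity, h0 1 le_rfl]
    have := le_exp_mul_of_hasDerivAt_neg_add hv (fun _ _ => le_rfl) ht
    rw [hv₀] at this
    exact (mul_nonneg_iff_of_pos_left (exp_pos t)).mp this
  | succ k ih =>
    have := le_exp_mul_of_hasDerivAt_neg_add (hasDerivAt_cascadeVelocity_succ h1 hk k)
      (fun s hs => mul_nonneg zero_le_two (ih hs)) ht
    rw [cascadeVelocity_succ_zero h0] at this
    exact (mul_nonneg_iff_of_pos_left (exp_pos t)).mp (zero_le_one.trans this)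

include h1 hk in
theorem cascadeVelocity_succ_pos (h0 : ∀ k : ℕ, 1 ≤ k → x k 0 = 1) (k : ℕ) {t : ℝ} (ht : 0 ≤ t) :
    0 < cascadeVelocity x (k + 1) t := by
  have := le_exp_mul_of_hasDerivAt_neg_add (hasDerivAt_cascadeVelocity_succ h1 hk k)
    (fun s hs => mul_nonneg zero_le_two (cascadeVelocity_nonneg h1 hk h0 k hs)) ht
  rw [cascadeVelocity_succ_zero h0] at this
  exact (mul_pos_iff_of_pos_left (exp_pos t)).mp (zero_lt_one.trans_le this)

end Cascade

/-- **The derivatives in the infinite cascade stay strictly positive.**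
For the cascade `ẋ₁ = -x₁ + 1`, `ẋ_{k+1} = -x_{k+1} + 2 x_k` with `x_k(0) = 1`,
for every `k ≥ 2` and every `t ≥ 0` the derivative `-x_k(t) + 2 x_{k-1}(t)` is
strictly positive. -/
theorem cascade_derivative_pos (x : ℕ → ℝ → ℝ)
    (h1 : ∀ t : ℝ, HasDerivAt (x 1) (-(x 1 t) + 1) t)
    (hk : ∀ k : ℕ, 1 ≤ k → ∀ t : ℝ,
      HasDerivAt (x (k + 1)) (-(x (k + 1) t) + 2 * x k t) t)
    (h0 : ∀ k : ℕ, 1 ≤ k → x k 0 = 1) :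
    ∀ k : ℕ, 2 ≤ k → ∀ t : ℝ, 0 ≤ t → 0 < -(x k t) + 2 * x (k - 1) t := by
  intro k hk2 t ht
  obtain ⟨m, rfl⟩ := Nat.exists_eq_add_of_le' hk2
  simpa [cascadeVelocity] using cascadeVelocity_succ_pos h1 hk h0 m ht
end

section
/- Let x : ℕ → ℝ → ℝ be a family of differentiable functions satisfying, for every t ∈ ℝ: x₁ has derivative −x₁(t) + 1 at t, and for every k ≥ 1, x_{k+1} has derivative −x_{k+1}(t) + 2·x_k(t) at t; and x_k(0) = 1 for every k ≥ 1. Then for every k ≥ 1, x_k(t) tends to 2^{k−1} as t → ∞. -/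
/-!
Each subsystem `ẏ = -y + u` is exponentially stable, so its state tracks its input: since
`d/dt (eᵗ (y - c)) = eᵗ (u - c)`, an eventual bound `u ≤ c` makes `eᵗ (y - c)` eventually
antitone, hence `y ≤ c + O(e⁻ᵗ)`. So `y → L` whenever `u → L`, and along the cascade the
limits double: `x₁ → 1` and `x_{k+1} → 2 · 2^(k-1)`.
-/

open Filter Topology Real Set

section StableFirstOrder

variable {f g : ℝ → ℝ}

theorem antitoneOn_exp_mul_sub_of_hasDerivAt_neg_add (hf : ∀ t, HasDerivAt f (-f t + g t) t)
    {T c : ℝ} (hg : ∀ t ≥ T, g t ≤ c) :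
    AntitoneOn (fun t => exp t * (f t - c)) (Ici T) := by
  have hderiv : ∀ t, HasDerivAt (fun t => exp t * (f t - c)) (exp t * (g t - c)) t := fun t =>
    ((hasDerivAt_exp t).mul ((hf t).sub_const c)).congr_deriv (by ring)
  refine antitoneOn_of_deriv_nonpos (convex_Ici T)
    (fun t _ => (hderiv t).continuousAt.continuousWithinAt)
    (fun t _ => (hderiv t).differentiableAt.differentiableWithinAt) fun t ht => ?_
  rw [interior_Ici] at ht
  rw [(hderiv t).deriv]
  exact mul_nonpos_of_nonneg_of_nonpos (exp_pos t).le (sub_nonpos.2 (hg t (le_of_lt ht)))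

theorem eventually_lt_of_hasDerivAt_neg_add (hf : ∀ t, HasDerivAt f (-f t + g t) t) {c a : ℝ}
    (hg : ∀ᶠ t in atTop, g t ≤ c) (hca : c < a) : ∀ᶠ t in atTop, f t < a := by
  obtain ⟨T, hT⟩ := eventually_atTop.1 hg
  have hanti := antitoneOn_exp_mul_sub_of_hasDerivAt_neg_add hf hT
  have hdecay : Tendsto (fun t => exp T * (f T - c) * exp (-t)) atTop (𝓝 0) := by
    simpa using tendsto_exp_neg_atTop_nhds_zero.const_mul (exp T * (f T - c))
  filter_upwards [eventually_ge_atTop T, hdecay.eventually (gt_mem_nhds (sub_pos.2 hca))]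
    with t hTt hsmall
  have hbound : exp t * (f t - c) ≤ exp T * (f T - c) :=
    hanti self_mem_Ici hTt hTt
  have hft : f t - c ≤ exp T * (f T - c) * exp (-t) := by
    rw [exp_neg, ← div_eq_mul_inv, le_div_iff₀ (exp_pos t)]
    linarith
  linarith

theorem tendsto_of_hasDerivAt_neg_add (hf : ∀ t, HasDerivAt f (-f t + g t) t) {L : ℝ}
    (hg : Tendsto g atTop (𝓝 L)) : Tendsto f atTop (𝓝 L) := by
  have hf_neg : ∀ t, HasDerivAt (-f) (-(-f) t + (-g) t) t := fun t =>
    (hf t).neg.congr_deriv (by simp [add_comm])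
  refine tendsto_order.2 ⟨fun a haL => ?_, fun a hLa => ?_⟩
  · obtain ⟨c, hac, hcL⟩ := exists_between haL
    have hg_neg : ∀ᶠ t in atTop, (-g) t ≤ -c :=
      ((tendsto_order.1 hg).1 c hcL).mono fun t ht => neg_le_neg ht.le
    filter_upwards [eventually_lt_of_hasDerivAt_neg_add hf_neg hg_neg (neg_lt_neg hac)]
      with t ht
    exact neg_lt_neg_iff.1 ht
  · obtain ⟨c, hLc, hca⟩ := exists_between hLa
    exact eventually_lt_of_hasDerivAt_neg_add hf
      (((tendsto_order.1 hg).2 c hLc).mono fun t ht => ht.le) hca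

end StableFirstOrder

theorem cascade_tendsto_pow_general (x : ℕ → ℝ → ℝ)
    (h1 : ∀ t : ℝ, HasDerivAt (x 1) (-(x 1 t) + 1) t)
    (hk : ∀ k : ℕ, 1 ≤ k → ∀ t : ℝ,
      HasDerivAt (x (k + 1)) (-(x (k + 1) t) + 2 * x k t) t) :
    ∀ k : ℕ, 1 ≤ k → Tendsto (x k) atTop (nhds ((2 : ℝ) ^ (k - 1))) := by
  intro k hk1
  induction k, hk1 using Nat.le_induction with
  | base => simpa using tendsto_of_hasDerivAt_neg_add h1 tendsto_const_nhds
  | succ k hk1 ih =>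
    have hpow : 2 * (2 : ℝ) ^ (k - 1) = 2 ^ (k + 1 - 1) := by
      rw [← pow_succ', Nat.sub_add_cancel hk1, Nat.add_sub_cancel]
    exact hpow ▸ tendsto_of_hasDerivAt_neg_add (hk k hk1) (ih.const_mul 2)

/-- **Asymptotic values in the infinite cascade.**
For the cascade `ẋ₁ = -x₁ + 1`, `ẋ_{k+1} = -x_{k+1} + 2 x_k` with `x_k(0) = 1`,
each component satisfies `x_k(t) → 2^(k-1)` as `t → ∞`. -/
theorem cascade_tendsto_pow (x : ℕ → ℝ → ℝ)
    (h1 : ∀ t : ℝ, HasDerivAt (x 1) (-(x 1 t) + 1) t)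
    (hk : ∀ k : ℕ, 1 ≤ k → ∀ t : ℝ,
      HasDerivAt (x (k + 1)) (-(x (k + 1) t) + 2 * x k t) t)
    (h0 : ∀ k : ℕ, 1 ≤ k → x k 0 = 1) :
    ∀ k : ℕ, 1 ≤ k → Tendsto (x k) atTop (nhds ((2 : ℝ) ^ (k - 1))) :=
  cascade_tendsto_pow_general x h1 hk
end

section
/- Let x : ℕ → ℝ → ℝ be a family of differentiable functions satisfying, for every t ∈ ℝ: x₁ has derivative −x₁(t) + 1 at t, and for every k ≥ 1, x_{k+1} has derivative −x_{k+1}(t) + 2·x_k(t) at t; and x_k(0) = 1 for every k ≥ 1. Then for every M ∈ ℝ there exist k ≥ 1 and T ∈ ℝ such that x_k(t) > M for all t ≥ T; consequently, the supremum norm of the infinite state vector, sup_{k ≥ 1} |x_k(t)|, tends to infinity as t → ∞. -/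
/-!
If `f' + f ≥ b` from some time on, then `t ↦ eᵗ (f t - b)` is eventually nondecreasing, so
`f t ≥ b - C e⁻ᵗ` and `f` eventually exceeds every `c < b`. Along the cascade `x₁' + x₁ = 1` and
`x_{k+1}' + x_{k+1} = 2 x_k`, so by induction `x_{n+1}` eventually exceeds every `c < 2ⁿ`.
-/

open Filter ENNReal Real Set

theorem monotoneOn_exp_mul_sub_of_le_add_deriv {f f' : ℝ → ℝ} {b T : ℝ}
    (hf : ∀ t, HasDerivAt f (f' t) t) (hb : ∀ t ≥ T, b ≤ f t + f' t) :
    MonotoneOn (fun t ↦ exp t * (f t - b)) (Ici T) := by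
  have hderiv : ∀ t, HasDerivAt (fun t ↦ exp t * (f t - b))
      (exp t * (f t + f' t - b)) t := fun t ↦
    ((Real.hasDerivAt_exp t).fun_mul ((hf t).sub_const b)).congr_deriv (by ring)
  refine monotoneOn_of_hasDerivWithinAt_nonneg (convex_Ici T)
    (fun t _ ↦ (hderiv t).continuousAt.continuousWithinAt)
    (fun t _ ↦ (hderiv t).hasDerivWithinAt) fun t ht ↦ ?_
  rw [interior_Ici] at ht
  exact mul_nonneg (exp_nonneg t) (sub_nonneg.2 (hb t (le_of_lt ht)))

theorem eventually_lt_of_le_add_deriv {f f' : ℝ → ℝ} {b c : ℝ}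
    (hf : ∀ t, HasDerivAt f (f' t) t) (hb : ∀ᶠ t in atTop, b ≤ f t + f' t) (hc : c < b) :
    ∀ᶠ t in atTop, c < f t := by
  obtain ⟨T, hT⟩ := eventually_atTop.1 hb
  have hmono := monotoneOn_exp_mul_sub_of_le_add_deriv hf hT
  have hlower : ∀ t ≥ T, b + exp T * (f T - b) * exp (-t) ≤ f t := fun t ht ↦ by
    have hTt : exp T * (f T - b) ≤ exp t * (f t - b) := hmono self_mem_Ici ht ht
    have := mul_le_mul_of_nonneg_left hTt (exp_nonneg (-t))
    rw [exp_neg, inv_mul_cancel_left₀ (exp_ne_zero t)] at this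
    rw [exp_neg]
    linarith
  have hlim : Tendsto (fun t ↦ b + exp T * (f T - b) * exp (-t)) atTop (nhds b) := by
    simpa using tendsto_exp_neg_atTop_nhds_zero.const_mul (exp T * (f T - b)) |>.const_add b
  filter_upwards [hlim.eventually (eventually_gt_nhds hc), eventually_ge_atTop T]
    with t hct hTt
  exact hct.trans_le (hlower t hTt)

theorem eventually_lt_of_eventually_lt_add_deriv {f f' : ℝ → ℝ} {b : ℝ}
    (hf : ∀ t, HasDerivAt f (f' t) t) (hb : ∀ c < b, ∀ᶠ t in atTop, c < f t + f' t) :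
    ∀ c < b, ∀ᶠ t in atTop, c < f t := fun c hc ↦ by
  obtain ⟨m, hcm, hmb⟩ := exists_between hc
  exact eventually_lt_of_le_add_deriv hf ((hb m hmb).mono fun _ h ↦ h.le) hcm

theorem cascade_eventually_lt (x : ℕ → ℝ → ℝ)
    (h1 : ∀ t : ℝ, HasDerivAt (x 1) (-(x 1 t) + 1) t)
    (hk : ∀ k : ℕ, 1 ≤ k → ∀ t : ℝ,
      HasDerivAt (x (k + 1)) (-(x (k + 1) t) + 2 * x k t) t) (n : ℕ) :
    ∀ c < (2 : ℝ) ^ n, ∀ᶠ t in atTop, c < x (n + 1) t := by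
  induction n with
  | zero =>
    refine eventually_lt_of_eventually_lt_add_deriv h1 fun c hc ↦ ?_
    exact Eventually.of_forall fun t ↦ by linarith
  | succ n ih =>
    refine eventually_lt_of_eventually_lt_add_deriv (hk (n + 1) (Nat.le_add_left 1 n))
      fun c hc ↦ ?_
    filter_upwards [ih (c / 2) (by rw [pow_succ] at hc; linarith)] with t ht
    linarith

theorem cascade_sup_norm_blowup_general (x : ℕ → ℝ → ℝ)
    (h1 : ∀ t : ℝ, HasDerivAt (x 1) (-(x 1 t) + 1) t)
    (hk : ∀ k : ℕ, 1 ≤ k → ∀ t : ℝ,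
      HasDerivAt (x (k + 1)) (-(x (k + 1) t) + 2 * x k t) t) :
    (∀ M : ℝ, ∃ k : ℕ, 1 ≤ k ∧ ∃ T : ℝ, ∀ t : ℝ, T ≤ t → M < x k t) ∧
    Tendsto (fun t : ℝ => ⨆ k : {k : ℕ // 1 ≤ k}, (‖x k t‖₊ : ℝ≥0∞))
      atTop (nhds ⊤) := by
  have unbounded : ∀ M : ℝ, ∃ k : ℕ, 1 ≤ k ∧ ∀ᶠ t in atTop, M < x k t := fun M ↦ by
    obtain ⟨n, hn⟩ := pow_unbounded_of_one_lt M one_lt_two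
    exact ⟨n + 1, Nat.le_add_left 1 n, cascade_eventually_lt x h1 hk n M hn⟩
  refine ⟨fun M ↦ ?_, ENNReal.tendsto_nhds_top fun n ↦ ?_⟩
  · obtain ⟨k, hk1, hM⟩ := unbounded M
    exact ⟨k, hk1, eventually_atTop.1 hM⟩
  · obtain ⟨k, hk1, hn⟩ := unbounded n
    filter_upwards [hn] with t ht
    calc (n : ℝ≥0∞) < ‖x k t‖₊ := by
          have : (n : ℝ) < ‖x k t‖₊ := ht.trans_le (le_abs_self _)
          exact_mod_cast this
      _ ≤ _ := le_iSup (fun j : {j : ℕ // 1 ≤ j} ↦ (‖x j t‖₊ : ℝ≥0∞)) ⟨k, hk1⟩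

/-- **The infinite cascade is not ISS: the sup norm blows up.**
For the cascade `ẋ₁ = -x₁ + 1`, `ẋ_{k+1} = -x_{k+1} + 2 x_k` with `x_k(0) = 1`,
for every `M` there are `k ≥ 1` and a time `T` after which `x_k` exceeds `M`;
consequently `sup_{k ≥ 1} |x_k(t)| → ∞` as `t → ∞`. -/
theorem cascade_sup_norm_blowup (x : ℕ → ℝ → ℝ)
    (h1 : ∀ t : ℝ, HasDerivAt (x 1) (-(x 1 t) + 1) t)
    (hk : ∀ k : ℕ, 1 ≤ k → ∀ t : ℝ,
      HasDerivAt (x (k + 1)) (-(x (k + 1) t) + 2 * x k t) t)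
    (h0 : ∀ k : ℕ, 1 ≤ k → x k 0 = 1) :
    (∀ M : ℝ, ∃ k : ℕ, 1 ≤ k ∧ ∃ T : ℝ, ∀ t : ℝ, T ≤ t → M < x k t) ∧
    Tendsto (fun t : ℝ => ⨆ k : {k : ℕ // 1 ≤ k}, (‖x k t‖₊ : ℝ≥0∞))
      atTop (nhds ⊤) :=
  cascade_sup_norm_blowup_general x h1 hk
end
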